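/- (Smallness additivity) Let n ≥ 1, let B_1, …, B_n be sets of strings, let g_1, …, g_n : ℕ → ℕ, and let σ be a string. If B_i is g_i-small above σ for every i ∈ {1, …, n}, then the union ⋃_{i=1}^{n} B_i is (∑_{i=1}^{n} g_i)-small above σ, where ∑_{i=1}^{n} g_i denotes the pointwise sum of the functions g_i. -/

import Mathlib

/-- A tree is a set of strings (finite sequences of naturals) closed under prefixes. -/
def IsTree (T : Set (List ℕ)) : Prop :=
  ∀ σ ∈ T, ∀ τ : List ℕ, τ <+: σ → τ ∈ T

/-- A leaf of `T` is an element of `T` with no immediate extension in `T`. -/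
def IsLeaf (T : Set (List ℕ)) (τ : List ℕ) : Prop :=
  τ ∈ T ∧ ∀ a : ℕ, τ ++ [a] ∉ T

/-- A tree `T` is `h`-bushy above `σ`: `σ ∈ T`, every element of `T` is comparable
with `σ`, and every non-leaf `τ ∈ T` extending `σ` has at least `h |τ|` immediate
extensions in `T`. -/
def BushyAbove (h : ℕ → ℕ) (σ : List ℕ) (T : Set (List ℕ)) : Prop :=
  IsTree T ∧ σ ∈ T ∧
  (∀ τ ∈ T, τ <+: σ ∨ σ <+: τ) ∧
  (∀ τ ∈ T, σ <+: τ → ¬ IsLeaf T τ → (h τ.length : ℕ∞) ≤ {a : ℕ | τ ++ [a] ∈ T}.encard)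

/-- `B` is `h`-big above `σ` if there is a finite tree, `h`-bushy above `σ`,
all of whose leaves belong to `B`. -/
def BigAbove (h : ℕ → ℕ) (σ : List ℕ) (B : Set (List ℕ)) : Prop :=
  ∃ T : Set (List ℕ), T.Finite ∧ BushyAbove h σ T ∧ ∀ τ, IsLeaf T τ → τ ∈ B

/-- `B` is `h`-small above `σ` if it is not `h`-big above `σ`. -/
def SmallAbove (h : ℕ → ℕ) (σ : List ℕ) (B : Set (List ℕ)) : Prop :=
  ¬ BigAbove h σ B

/-! Bigness propagates from the leaves upwards: `B` is big above any of its elements, and if `B` is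
`h`-big above at least `h |τ|` immediate extensions of `τ` (and above at least one), grafting the
witnessing trees under `τ` shows that `B` is `h`-big above `τ`. Given a finite `(g + h)`-bushy tree
with leaves in `B ∪ C`, induction from the leaves shows that every node is `g`-big for `B` or
`h`-big for `C`: a non-leaf has at least `g + h` children, so by pigeonhole at least `g` of them
are of the first kind or at least `h` of the second. Induction on the number of sets finishes. -/

namespace List

variable {α : Type*}

theorem IsPrefix.exists_concat_prefix {ρ τ : List α} (h : ρ <+: τ) (hne : ρ ≠ τ) :
    ∃ a, ρ ++ [a] <+: τ := by
  obtain ⟨_ | ⟨a, l⟩, rfl⟩ := h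
  · simp at hne
  · exact ⟨a, by simp⟩

theorem eq_of_concat_prefix_of_concat_prefix {τ ρ : List α} {a b : α} (ha : τ ++ [a] <+: ρ)
    (hb : τ ++ [b] <+: ρ) : a = b := by
  rcases prefix_or_prefix_of_prefix ha hb with h | h <;> simp at h <;> simp [h]

theorem finite_setOf_prefix (τ : List α) : {ρ | ρ <+: τ}.Finite := by
  simpa only [← mem_inits] using τ.inits.finite_toSet

end List

theorem Set.Finite.concat_induction {α : Type*} {T : Set (List α)} {P : List α → Prop}
    (hT : T.Finite)
    (step : ∀ τ ∈ T, (∀ a, τ ++ [a] ∈ T → P (τ ++ [a])) → P τ) : ∀ τ ∈ T, P τ := by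
  obtain ⟨N, hN⟩ := (hT.image List.length).bddAbove
  suffices ∀ k τ, τ ∈ T → N < τ.length + k → P τ from fun τ hτ => this (N + 1) τ hτ (by omega)
  intro k
  induction k with
  | zero => exact fun τ hτ hlt => absurd (hN ⟨τ, hτ, rfl⟩) (by omega)
  | succ k ih => exact fun τ hτ hlt => step τ hτ fun a ha => ih _ ha (by simp; omega)

theorem Set.Finite.exists_isLeaf {T : Set (List ℕ)} (hT : T.Finite) (hne : T.Nonempty) :
    ∃ τ, IsLeaf T τ := by
  obtain ⟨σ, hσ⟩ := hne
  refine hT.concat_induction (P := fun _ => ∃ τ, IsLeaf T τ) (fun τ hτ ih => ?_) σ hσ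
  by_cases h : ∃ a, τ ++ [a] ∈ T
  · obtain ⟨a, ha⟩ := h
    exact ih a ha
  · exact ⟨τ, hτ, not_exists.mp h⟩

theorem isLeaf_setOf_prefix_iff {τ ρ : List ℕ} : IsLeaf {ρ | ρ <+: τ} ρ ↔ ρ = τ := by
  refine ⟨fun ⟨hρ, hleaf⟩ => ?_, ?_⟩
  · by_contra hne
    obtain ⟨a, ha⟩ := hρ.exists_concat_prefix hne
    exact hleaf a ha
  · rintro rfl
    exact ⟨List.prefix_refl ρ, fun a ha => by simpa using ha.length_le⟩

theorem BushyAbove.prefix_or_concat_prefix {h : ℕ → ℕ} {τ ρ : List ℕ} {a : ℕ} {T : Set (List ℕ)}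
    (hT : BushyAbove h (τ ++ [a]) T) (hρ : ρ ∈ T) : ρ <+: τ ∨ τ ++ [a] <+: ρ := by
  rcases hT.2.2.1 ρ hρ with hle | hge
  · rcases List.prefix_concat_iff.mp hle with rfl | hle
    exacts [.inr (List.prefix_refl _), .inl hle]
  · exact .inr hge

theorem not_bigAbove_empty {h : ℕ → ℕ} {σ : List ℕ} : ¬ BigAbove h σ ∅ := by
  rintro ⟨T, hfin, hT, hleaf⟩
  obtain ⟨τ, hτ⟩ := hfin.exists_isLeaf ⟨σ, hT.2.1⟩
  exact hleaf τ hτ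

theorem bigAbove_of_mem {h : ℕ → ℕ} {τ : List ℕ} {B : Set (List ℕ)} (hτ : τ ∈ B) :
    BigAbove h τ B := by
  refine ⟨{ρ | ρ <+: τ}, τ.finite_setOf_prefix,
    ⟨fun ρ hρ π hπ => hπ.trans hρ, List.prefix_refl τ, fun ρ hρ => .inl hρ, ?_⟩, ?_⟩
  · intro ρ hρ hτρ hleaf
    exact absurd (isLeaf_setOf_prefix_iff.mpr (hρ.eq_of_length_le hτρ.length_le)) hleaf
  · intro ρ hρ
    rwa [isLeaf_setOf_prefix_iff.mp hρ]

def graft (τ : List ℕ) (S : Set ℕ) (T : ℕ → Set (List ℕ)) : Set (List ℕ) :=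
  {ρ | ρ <+: τ} ∪ ⋃ a ∈ S, T a

section Graft

variable {h : ℕ → ℕ} {τ ρ : List ℕ} {S : Set ℕ} {T : ℕ → Set (List ℕ)}
  (hT : ∀ a ∈ S, BushyAbove h (τ ++ [a]) (T a))
include hT

theorem prefix_or_prefix_of_mem_graft (hρ : ρ ∈ graft τ S T) : ρ <+: τ ∨ τ <+: ρ := by
  rcases hρ with hρ | hρ
  · exact .inl hρ
  · obtain ⟨a, ha, hρ⟩ := Set.mem_iUnion₂.mp hρ
    exact ((hT a ha).prefix_or_concat_prefix hρ).imp_right ((τ.prefix_append [a]).trans)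

theorem exists_mem_of_mem_graft (hρ : ρ ∈ graft τ S T) (hτρ : τ <+: ρ) (hne : ρ ≠ τ) :
    ∃ a ∈ S, ρ ∈ T a ∧ τ ++ [a] <+: ρ := by
  simp only [graft, Set.mem_union, Set.mem_iUnion] at hρ
  rcases hρ with hρτ | ⟨a, ha, hρ⟩
  · exact absurd (hρτ.eq_of_length_le hτρ.length_le) hne
  · refine ⟨a, ha, hρ, ?_⟩
    rcases (hT a ha).prefix_or_concat_prefix hρ with hρτ | hρ
    exacts [absurd (hρτ.eq_of_length_le hτρ.length_le) hne, hρ]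

theorem concat_mem_graft_iff {a c : ℕ} (ha : a ∈ S) (hρ : τ ++ [a] <+: ρ) :
    ρ ++ [c] ∈ graft τ S T ↔ ρ ++ [c] ∈ T a := by
  refine ⟨fun hc => ?_, fun hc => .inr (Set.mem_biUnion ha hc)⟩
  have hlen : τ.length < (ρ ++ [c]).length := by
    have := hρ.length_le
    simp only [List.length_append, List.length_singleton] at this ⊢
    omega
  obtain ⟨b, -, hcb, hbc⟩ := exists_mem_of_mem_graft hT hc
    (((τ.prefix_append [a]).trans hρ).trans (ρ.prefix_append [c])) (by rintro rfl; simp at hlen)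
  rwa [List.eq_of_concat_prefix_of_concat_prefix (hρ.trans (ρ.prefix_append [c])) hbc]

theorem bushyAbove_graft (hS : (h τ.length : ℕ∞) ≤ S.encard) : BushyAbove h τ (graft τ S T) := by
  refine ⟨?_, .inl (List.prefix_refl τ), ?_, ?_⟩
  · rintro ρ (hρ | hρ) π hπ
    · exact .inl (hπ.trans hρ)
    · obtain ⟨a, ha, hρ⟩ := Set.mem_iUnion₂.mp hρ
      exact .inr (Set.mem_biUnion ha ((hT a ha).1 ρ hρ π hπ))
  · exact fun ρ hρ => prefix_or_prefix_of_mem_graft hT hρ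
  · intro ρ hρ hτρ hleaf
    by_cases hne : ρ = τ
    · subst hne
      exact hS.trans (Set.encard_mono fun a ha => .inr (Set.mem_biUnion ha (hT a ha).2.1))
    obtain ⟨a, ha, hρa, hpre⟩ := exists_mem_of_mem_graft hT hρ hτρ hne
    have hchildren : {c | ρ ++ [c] ∈ graft τ S T} = {c | ρ ++ [c] ∈ T a} :=
      Set.ext fun c => concat_mem_graft_iff hT ha hpre
    rw [hchildren]
    refine (hT a ha).2.2.2 ρ hρa hpre fun hl => hleaf ⟨hρ, fun c hc => ?_⟩
    exact hl.2 c ((concat_mem_graft_iff hT ha hpre).mp hc)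

theorem exists_isLeaf_of_isLeaf_graft (hS : S.Nonempty) (hl : IsLeaf (graft τ S T) ρ) :
    ∃ a ∈ S, IsLeaf (T a) ρ := by
  have hnot : ¬ ρ <+: τ := by
    intro hρτ
    by_cases hne : ρ = τ
    · subst hne
      obtain ⟨a, ha⟩ := hS
      exact hl.2 a (.inr (Set.mem_biUnion ha (hT a ha).2.1))
    · obtain ⟨a, ha⟩ := hρτ.exists_concat_prefix hne
      exact hl.2 a (.inl ha)
  have hτρ : τ <+: ρ := (prefix_or_prefix_of_mem_graft hT hl.1).resolve_left hnot
  obtain ⟨a, ha, hρa, hpre⟩ := exists_mem_of_mem_graft hT hl.1 hτρ (by rintro rfl; exact hnot hτρ)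
  exact ⟨a, ha, hρa, fun c hc => hl.2 c ((concat_mem_graft_iff hT ha hpre).mpr hc)⟩

end Graft

theorem BigAbove.of_concat {h : ℕ → ℕ} {τ : List ℕ} {B : Set (List ℕ)} {S : Set ℕ}
    (hfin : S.Finite) (hne : S.Nonempty) (hcard : (h τ.length : ℕ∞) ≤ S.encard)
    (hbig : ∀ a ∈ S, BigAbove h (τ ++ [a]) B) : BigAbove h τ B := by
  choose! T hTfin hT hleaf using hbig
  refine ⟨graft τ S T, (τ.finite_setOf_prefix).union (hfin.biUnion hTfin),
    bushyAbove_graft hT hcard, fun ρ hρ => ?_⟩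
  obtain ⟨a, ha, hρa⟩ := exists_isLeaf_of_isLeaf_graft hT hne hρ
  exact hleaf a ha ρ hρa

theorem Set.nonempty_and_le_encard_or_of_add_le_encard_union {α : Type*} {s t : Set α}
    {m n : ℕ∞} (hne : (s ∪ t).Nonempty) (hcard : m + n ≤ (s ∪ t).encard) :
    (s.Nonempty ∧ m ≤ s.encard) ∨ (t.Nonempty ∧ n ≤ t.encard) := by
  rcases s.eq_empty_or_nonempty with rfl | hs
  · rw [Set.empty_union] at hne hcard
    exact .inr ⟨hne, le_add_self.trans hcard⟩
  rcases t.eq_empty_or_nonempty with rfl | ht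
  · rw [Set.union_empty] at hcard
    exact .inl ⟨hs, le_self_add.trans hcard⟩
  by_contra! hlt
  have hsum : s.encard + t.encard < m + n := ENat.add_lt_add (hlt.1 hs) (hlt.2 ht)
  exact (hcard.trans (Set.encard_union_le s t)).not_gt hsum

theorem BigAbove.or_of_add {g h : ℕ → ℕ} {σ : List ℕ} {B C : Set (List ℕ)}
    (hbig : BigAbove (g + h) σ (B ∪ C)) : BigAbove g σ B ∨ BigAbove h σ C := by
  obtain ⟨T, hfin, hT, hleaf⟩ := hbig
  suffices ∀ τ ∈ T, σ <+: τ → BigAbove g τ B ∨ BigAbove h τ C from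
    this σ hT.2.1 (List.prefix_refl σ)
  refine hfin.concat_induction fun τ hτ ih hστ => ?_
  by_cases hl : IsLeaf T τ
  · exact (hleaf τ hl).imp bigAbove_of_mem bigAbove_of_mem
  set A := {a | τ ++ [a] ∈ T}
  set AB := {a ∈ A | BigAbove g (τ ++ [a]) B}
  set AC := {a ∈ A | BigAbove h (τ ++ [a]) C}
  have hA : A = AB ∪ AC := by
    ext a
    simp only [AB, AC, Set.mem_union, Set.mem_sep_iff, ← and_or_left, iff_self_and]
    exact fun ha => ih a ha (hστ.trans (τ.prefix_append [a]))
  have hAfin : A.Finite := hfin.preimage fun a _ b _ hab => by simpa using hab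
  have hAne : (AB ∪ AC).Nonempty := by
    rw [← hA]
    by_contra hA0
    exact hl ⟨hτ, fun a ha => hA0 ⟨a, ha⟩⟩
  have hcard : (g τ.length : ℕ∞) + h τ.length ≤ (AB ∪ AC).encard := by
    rw [← hA]
    exact_mod_cast hT.2.2.2 τ hτ hστ hl
  rcases Set.nonempty_and_le_encard_or_of_add_le_encard_union hAne hcard with
    ⟨hne, hle⟩ | ⟨hne, hle⟩
  · exact .inl (.of_concat (hAfin.subset (Set.sep_subset _ _)) hne hle fun a ha => ha.2)
  · exact .inr (.of_concat (hAfin.subset (Set.sep_subset _ _)) hne hle fun a ha => ha.2)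

theorem BigAbove.exists_of_biUnion {ι : Type*} {g : ι → ℕ → ℕ} {σ : List ℕ}
    {B : ι → Set (List ℕ)} (s : Finset ι) (hbig : BigAbove (∑ i ∈ s, g i) σ (⋃ i ∈ s, B i)) :
    ∃ i ∈ s, BigAbove (g i) σ (B i) := by
  classical
  induction s using Finset.induction_on with
  | empty =>
    simp only [Finset.notMem_empty, Set.iUnion_of_empty, Set.iUnion_empty] at hbig
    exact absurd hbig not_bigAbove_empty
  | insert j s hj ih =>
    rw [Finset.sum_insert hj, Finset.set_biUnion_insert] at hbig
    rcases hbig.or_of_add with hbig | hbig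
    · exact ⟨j, Finset.mem_insert_self j s, hbig⟩
    · obtain ⟨i, hi, hbig⟩ := ih hbig
      exact ⟨i, Finset.mem_insert_of_mem hi, hbig⟩

theorem smallness_additivity_general (n : ℕ) (B : Fin n → Set (List ℕ))
    (g : Fin n → ℕ → ℕ) (σ : List ℕ)
    (hsmall : ∀ i : Fin n, SmallAbove (g i) σ (B i)) :
    SmallAbove (fun k => ∑ i : Fin n, g i k) σ (⋃ i : Fin n, B i) := by
  intro hbig
  obtain ⟨i, -, hi⟩ := BigAbove.exists_of_biUnion (g := g) (B := B) Finset.univ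
    (by simpa only [← Finset.sum_apply, Finset.mem_univ, Set.iUnion_true] using hbig)
  exact hsmall i hi

/-- Smallness additivity: if `B i` is `g i`-small above `σ` for each `i`, then
`⋃ i, B i` is `(∑ i, g i)`-small above `σ` (pointwise sum). -/
theorem smallness_additivity (n : ℕ) (hn : 1 ≤ n) (B : Fin n → Set (List ℕ))
    (g : Fin n → ℕ → ℕ) (σ : List ℕ)
    (hsmall : ∀ i : Fin n, SmallAbove (g i) σ (B i)) :
    SmallAbove (fun k => ∑ i : Fin n, g i k) σ (⋃ i : Fin n, B i) :=
  smallness_additivity_general n B g σ hsmall
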